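/- Let M be an algebra on a cardinal λ (a first-order structure with universe λ in a language consisting of countably many function symbols and no relation symbols), and let cl_M(X) denote the closure of a set X ⊆ λ under the functions of M (the universe of the substructure generated by X). If M satisfies (★)²_M — for every countably infinite A ⊆ λ there is a countably infinite B ⊆ A such that for every countably infinite C ⊆ B one has cl_M(B) = cl_M(C) — then M satisfies (★)⁰_M: for every sequence ⟨α_n : n < ω⟩ of elements of λ, for all but finitely many n one has α_n ∈ cl_M({α_k : n < k < ω}). -/

import Mathlib

open Cardinal Filter

universe u v

/-- An algebra (first-order structure with only function symbols) whose
function symbols are indexed by `ι`, on the universe `α`.  Each symbol `i`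
has a finite arity `arity i` and is interpreted by `op i`. -/
structure AlgebraOn (ι : Type v) (α : Type u) where
  arity : ι → ℕ
  op : (i : ι) → (Fin (arity i) → α) → α

/-- The closure of a set `X ⊆ α` under the operations of the algebra `M`:
the universe of the substructure generated by `X`. -/
def AlgebraOn.cl {ι : Type v} {α : Type u} (M : AlgebraOn ι α) (X : Set α) : Set α :=
  ⋂₀ {Y : Set α | X ⊆ Y ∧
      ∀ (i : ι) (v : Fin (M.arity i) → α), (∀ j, v j ∈ Y) → M.op i v ∈ Y}

/-- Condition `(★)⁰_M`: for every `ω`-sequence of elements, all but finitely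
many of its terms belong to the closure of the set of strictly later terms. -/
def Star0 {ι : Type v} {α : Type u} (M : AlgebraOn ι α) : Prop :=
  ∀ a : ℕ → α, ∀ᶠ n in Filter.atTop, a n ∈ M.cl (a '' Set.Ioi n)

/-- Condition `(★)¹_M`: there is no `ω`-sequence of countably infinite subsets
whose closures are strictly decreasing. -/
def Star1 {ι : Type v} {α : Type u} (M : AlgebraOn ι α) : Prop :=
  ¬ ∃ A : ℕ → Set α,
      (∀ n, (A n).Countable ∧ (A n).Infinite) ∧
      (∀ n, M.cl (A (n + 1)) ⊂ M.cl (A n))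

/-- Condition `(★)²_M`: every countably infinite set has a countably infinite
subset all of whose countably infinite subsets generate the same closure. -/
def Star2 {ι : Type v} {α : Type u} (M : AlgebraOn ι α) : Prop :=
  ∀ A : Set α, A.Countable → A.Infinite →
    ∃ B : Set α, B ⊆ A ∧ B.Countable ∧ B.Infinite ∧
      ∀ C : Set α, C ⊆ B → C.Countable → C.Infinite → M.cl B = M.cl C

/-- `Pr★(λ)`: there is an algebra on `λ` with countably many function symbols
satisfying `(★)⁰`. -/
def PrStar (lam : Cardinal.{u}) : Prop :=
  ∃ M : AlgebraOn ℕ lam.out, Star0 M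

/-- `Pr★(λ, κ)`: there is an algebra on `λ` with at most `κ` function symbols
satisfying `(★)⁰`. -/
def PrStarK (lam kap : Cardinal.{u}) : Prop :=
  ∃ (ι : Type u) (M : AlgebraOn ι lam.out), #ι ≤ kap ∧ Star0 M

/-- The pair `(λ, κ)` has the Kalikow property: there are functions
`F n : (^n λ) → κ` such that, with `F η n = F n (η ↾ n)`, two `ω`-sequences
over `λ` are eventually equal iff their images are eventually equal. -/
def HasKalikow (lam kap : Cardinal.{u}) : Prop :=
  ∃ F : (n : ℕ) → (Fin n → lam.out) → kap.out,
    ∀ η ν : ℕ → lam.out,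
      (∀ᶠ n in Filter.atTop, η n = ν n) ↔
        (∀ᶠ n in Filter.atTop,
          F n (fun i => η i.1) = F n (fun i => ν i.1))

theorem AlgebraOn.subset_cl {ι : Type v} {α : Type u} (M : AlgebraOn ι α) (X : Set α) :
    X ⊆ M.cl X := fun x hx => Set.mem_sInter.2 fun _ hY => hY.1 hx

theorem AlgebraOn.cl_mono {ι : Type v} {α : Type u} (M : AlgebraOn ι α) {X Y : Set α}
    (hXY : X ⊆ Y) : M.cl X ⊆ M.cl Y := fun x hx =>
  Set.mem_sInter.2 fun Z hZ => Set.mem_sInter.1 hx Z ⟨hXY.trans hZ.1, hZ.2⟩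

/-- `(★)²_M` implies `(★)⁰_M`. -/
theorem star2_implies_star0 (lam : Cardinal.{u}) (M : AlgebraOn ℕ lam.out)
    (h : Star2 M) : Star0 M := by
  intro a
  by_contra hbad
  rw [Filter.not_eventually] at hbad
  obtain ⟨φ, hφ, hφbad⟩ := Filter.extraction_of_frequently_atTop hbad
  set b : ℕ → lam.out := fun n => a (φ n) with hb
  have hbinj : Function.Injective b := by
    intro i j hij
    by_contra hne
    rcases Nat.lt_or_ge i j with hlt | hge
    · have : b i ∈ M.cl (a '' Set.Ioi (φ i)) := hij ▸ M.subset_cl _ ⟨φ j, hφ hlt, rfl⟩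
      exact hφbad i this
    · have hlt : j < i := lt_of_le_of_ne hge (Ne.symm hne)
      have : b j ∈ M.cl (a '' Set.Ioi (φ j)) := hij.symm ▸ M.subset_cl _ ⟨φ i, hφ hlt, rfl⟩
      exact hφbad j this
  obtain ⟨B, hBA, hBc, hBi, hC⟩ := h (Set.range b) (Set.countable_range b)
    (Set.infinite_range_of_injective hbinj)
  have hS : (b ⁻¹' B).Infinite := hBi.preimage hBA
  obtain ⟨i, hi⟩ := hS.nonempty
  set C : Set lam.out := b '' (b ⁻¹' B ∩ Set.Ioi i) with hCdef
  have hCB : C ⊆ B := by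
    rintro x ⟨n, ⟨hn, _⟩, rfl⟩; exact hn
  have hCi : C.Infinite :=
    ((hS.diff (Set.finite_Iic i)).mono (by
      intro n hn
      exact ⟨hn.1, (lt_of_not_ge (fun hle => hn.2 hle) : i < n)⟩)).image (hbinj.injOn)
  have hclBC := hC C hCB (Set.Countable.image (Set.to_countable _) b) hCi
  have hsub : C ⊆ a '' Set.Ioi (φ i) := by
    rintro x ⟨n, ⟨_, hni⟩, rfl⟩
    exact ⟨φ n, hφ hni, rfl⟩
  exact hφbad i (M.cl_mono hsub (hclBC ▸ M.subset_cl B hi))
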